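/- Let G = (V,E) be a finite simple graph with vertex set V = {1,…,N}, let d ≥ 1, and let H ∈ M_d(ℂ) satisfy H†H = d·I, H = Hᵀ, and |H_{ij}| = 1 for all i, j. Let C^H be the diagonal unitary on ℂ^d ⊗ ℂ^d with C^H(e_i ⊗ e_j) = H_{ij}·(e_i ⊗ e_j); for an edge {i,j} ∈ E, let C^H_{ij} denote C^H applied to tensor factors i and j of (ℂ^d)^{⊗N} (all such operators commute, being diagonal). Set U_G = ∏_{{i,j}∈E} C^H_{ij}, |+⟩ = d^{−1/2} H e_0 ∈ ℂ^d (a unit vector), and define the graph state |G⟩ = U_G |+⟩^{⊗N}. For each vertex i let 𝒩_i = {i} ∪ {j : {i,j} ∈ E}. Then |G⟩ is RFTS with respect to 𝒩 = {𝒩_i}_{i∈V}: the CPTP maps E_i(ρ) = U_G [ ((|+⟩⟨+| Tr)_i ⊗ Id_{{i}^c}) ( U_G† ρ U_G ) ] U_G† are 𝒩_i-neighborhood maps, each satisfies E_i(|G⟩⟨G|) = |G⟩⟨G|, and the composition of the N maps E_1,…,E_N in any order sends every density matrix to |G⟩⟨G|. -/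

import Mathlib

open scoped BigOperators Matrix ComplexOrder

namespace QLS

variable {N : ℕ}

/-- Index type of the full multipartite Hilbert space `⊗ᵢ ℂ^{d i}`. -/
abbrev Idx (d : Fin N → ℕ) : Type := ∀ i, Fin (d i)

/-- Index type of the Hilbert space `⊗_{i ∈ S} ℂ^{d i}` of a subset `S` of subsystems. -/
abbrev SIdx (d : Fin N → ℕ) (S : Finset (Fin N)) : Type := ∀ i : S, Fin (d i)

/-- Merge an index on `S` and an index on `Sᶜ` into a global index. -/
def merge (d : Fin N → ℕ) (S : Finset (Fin N)) (u : SIdx d S) (w : SIdx d Sᶜ) : Idx d :=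
  fun i => if h : i ∈ S then u ⟨i, h⟩ else w ⟨i, Finset.mem_compl.mpr h⟩

/-- Partial trace over the complement of `S`: `Tr_{Sᶜ}`. -/
noncomputable def ptrace (d : Fin N → ℕ) (S : Finset (Fin N))
    (M : Matrix (Idx d) (Idx d) ℂ) : Matrix (SIdx d S) (SIdx d S) ℂ :=
  fun u v => ∑ w : SIdx d Sᶜ, M (merge d S u w) (merge d S v w)

/-- `X` acts only on the subsystems in `S`, i.e. `X = Y ⊗ I_{Sᶜ}`. -/
def ActsOn (d : Fin N → ℕ) (S : Finset (Fin N)) (X : Matrix (Idx d) (Idx d) ℂ) : Prop :=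
  ∃ Y : Matrix (SIdx d S) (SIdx d S) ℂ, ∀ (u u' : SIdx d S) (w w' : SIdx d Sᶜ),
    X (merge d S u w) (merge d S u' w') = if w = w' then Y u u' else 0

/-- The rank-one projector `|ψ⟩⟨ψ|`. -/
noncomputable def proj (d : Fin N → ℕ) (ψ : Idx d → ℂ) : Matrix (Idx d) (Idx d) ℂ :=
  fun a b => ψ a * (starRingEnd ℂ) (ψ b)

/-- `ψ` is a unit vector. -/
def IsUnitVec (d : Fin N → ℕ) (ψ : Idx d → ℂ) : Prop :=
  ∑ a, Complex.normSq (ψ a) = 1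

/-- Superoperators on the multipartite space. -/
abbrev Sop (d : Fin N → ℕ) : Type :=
  Matrix (Idx d) (Idx d) ℂ →ₗ[ℂ] Matrix (Idx d) (Idx d) ℂ

/-- `E` is completely positive and trace preserving (Kraus form). -/
def IsCPTP (d : Fin N → ℕ) (E : Sop d) : Prop :=
  ∃ (m : ℕ) (K : Fin m → Matrix (Idx d) (Idx d) ℂ),
    (∀ ρ, E ρ = ∑ i, K i * ρ * (K i)ᴴ) ∧ (∑ i, (K i)ᴴ * K i = 1)

/-- `E` is a CPTP map whose Kraus operators all act only on `S`. -/
def IsNeighborhoodMap (d : Fin N → ℕ) (S : Finset (Fin N)) (E : Sop d) : Prop :=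
  ∃ (m : ℕ) (K : Fin m → Matrix (Idx d) (Idx d) ℂ),
    (∀ i, ActsOn d S (K i)) ∧
    (∀ ρ, E ρ = ∑ i, K i * ρ * (K i)ᴴ) ∧ (∑ i, (K i)ᴴ * K i = 1)

/-- A density matrix. -/
def IsDensity (d : Fin N → ℕ) (ρ : Matrix (Idx d) (Idx d) ℂ) : Prop :=
  ρ.PosSemidef ∧ ρ.trace = 1

/-- Sequential composition `E_{T-1} ∘ ⋯ ∘ E_1 ∘ E_0` (index `0` applied first). -/
def seqComp {V : Type*} [AddCommMonoid V] [Module ℂ V] :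
    ∀ {T : ℕ}, (Fin T → (V →ₗ[ℂ] V)) → (V →ₗ[ℂ] V)
  | 0, _ => LinearMap.id
  | T + 1, E => E (Fin.last T) ∘ₗ seqComp fun t => E t.castSucc

/-- Finite-time stabilizability of `ψ` w.r.t. the neighborhood structure `𝒩`. -/
def FTS (d : Fin N → ℕ) {K : ℕ} (𝒩 : Fin K → Finset (Fin N)) (ψ : Idx d → ℂ) : Prop :=
  ∃ (T : ℕ) (E : Fin T → Sop d),
    (∀ t, ∃ k, IsNeighborhoodMap d (𝒩 k) (E t)) ∧
    (∀ t, E t (proj d ψ) = proj d ψ) ∧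
    (∀ σ, IsDensity d σ → seqComp E σ = proj d ψ)

/-- Robust finite-time stabilizability: any ordering of the maps prepares `ψ`. -/
def RFTS (d : Fin N → ℕ) {K : ℕ} (𝒩 : Fin K → Finset (Fin N)) (ψ : Idx d → ℂ) : Prop :=
  ∃ (T : ℕ) (E : Fin T → Sop d),
    (∀ t, ∃ k, IsNeighborhoodMap d (𝒩 k) (E t)) ∧
    (∀ t, E t (proj d ψ) = proj d ψ) ∧
    (∀ π : Equiv.Perm (Fin T), ∀ σ, IsDensity d σ → seqComp (fun t => E (π t)) σ = proj d ψ)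

/-- The Schmidt span of `ψ` on `S`: the range of the reduced state `Tr_{Sᶜ}|ψ⟩⟨ψ|`. -/
noncomputable def schmidtSpan (d : Fin N → ℕ) (S : Finset (Fin N)) (ψ : Idx d → ℂ) :
    Submodule ℂ (SIdx d S → ℂ) :=
  LinearMap.range (Matrix.mulVecLin (ptrace d S (proj d ψ)))

/-- Slicing a global vector along a fixed index of `Sᶜ` (linear in the vector). -/
def sliceMap (d : Fin N → ℕ) (S : Finset (Fin N)) (w : SIdx d Sᶜ) :
    (Idx d → ℂ) →ₗ[ℂ] (SIdx d S → ℂ) where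
  toFun v := fun u => v (merge d S u w)
  map_add' _ _ := rfl
  map_smul' _ _ := rfl

/-- The extended Schmidt span `Σ̄_S(ψ) = Σ_S(ψ) ⊗ H_{Sᶜ}`, described as the set of vectors
all of whose slices along `Sᶜ` lie in the Schmidt span. -/
noncomputable def extSchmidtSpan (d : Fin N → ℕ) (S : Finset (Fin N)) (ψ : Idx d → ℂ) :
    Submodule ℂ (Idx d → ℂ) :=
  ⨅ w : SIdx d Sᶜ, (schmidtSpan d S ψ).comap (sliceMap d S w)

/-- `P` is the orthogonal projection matrix onto the subspace `V` (Hermitian idempotent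
with range `V`). -/
def IsOrthProjOnto {ι : Type*} [Fintype ι] [DecidableEq ι]
    (P : Matrix ι ι ℂ) (V : Submodule ℂ (ι → ℂ)) : Prop :=
  Pᴴ = P ∧ P * P = P ∧ LinearMap.range P.mulVecLin = V

/-- The neighborhood expansion `A^𝒩` of a set of subsystems. -/
def expand {K : ℕ} (𝒩 : Fin K → Finset (Fin N)) (A : Finset (Fin N)) : Finset (Fin N) :=
  Finset.univ.biUnion fun k => if (𝒩 k ∩ A).Nonempty then 𝒩 k else ∅

/-- Standard sesquilinear dot product. -/
noncomputable def dotc {ι : Type*} [Fintype ι] (u v : ι → ℂ) : ℂ :=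
  ∑ a, (starRingEnd ℂ) (u a) * v a

/-- Slicing a global vector along a single site `i`, other coordinates fixed by `a`. -/
def sliceAt (d : Fin N → ℕ) (i : Fin N) (a : Idx d) :
    (Idx d → ℂ) →ₗ[ℂ] (Fin (d i) → ℂ) where
  toFun v := fun x => v (Function.update a i x)
  map_add' _ _ := rfl
  map_smul' _ _ := rfl

/-- The tensor product `⊗ᵢ tᵢ` of local subspaces, as a subspace of the global space:
the set of vectors all of whose single-site slices lie in the local subspaces. -/
noncomputable def tensorSub (d : Fin N → ℕ) (t : ∀ i, Submodule ℂ (Fin (d i) → ℂ)) :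
    Submodule ℂ (Idx d → ℂ) :=
  ⨅ i, ⨅ a : Idx d, (t i).comap (sliceAt d i a)

open Classical in
/-- The operator `X` on the `j`-th factor, amplified by the identity on all other factors. -/
noncomputable def factorMat {M : ℕ} (m : Fin M → ℕ) (j : Fin M)
    (X : Matrix (Fin (m j)) (Fin (m j)) ℂ) :
    Matrix (∀ l, Fin (m l)) (∀ l, Fin (m l)) ℂ :=
  fun a b => if (∀ l, l ≠ j → a l = b l) then X (a j) (b j) else 0

/-- Partial trace onto a single site `i`. -/
noncomputable def ptrace1 (d : Fin N → ℕ) (i : Fin N) (M : Matrix (Idx d) (Idx d) ℂ) :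
    Matrix (Fin (d i)) (Fin (d i)) ℂ :=
  fun x y => ∑ a : Idx d, if a i = x then M a (Function.update a i y) else 0

/-- Local support `H̃ᵢ`: the range of the single-site reduced state of `ψ`. -/
noncomputable def localSupp (d : Fin N → ℕ) (ψ : Idx d → ℂ) (i : Fin N) :
    Submodule ℂ (Fin (d i) → ℂ) :=
  LinearMap.range (Matrix.mulVecLin (ptrace1 d i (proj d ψ)))

/-- Set of skew-Hermitian matrices commuting with `|ψ⟩⟨ψ|` (the Lie algebra `u_ψ`). -/
noncomputable def stabSet (d : Fin N → ℕ) (ψ : Idx d → ℂ) :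
    Set (Matrix (Idx d) (Idx d) ℂ) :=
  {X | Xᴴ = -X ∧ X * proj d ψ = proj d ψ * X}

/-- The Lie algebra `u_{𝒩ₖ,ψ}` of skew-Hermitian stabilizers acting only on `S`. -/
noncomputable def nstabSet (d : Fin N → ℕ) (S : Finset (Fin N)) (ψ : Idx d → ℂ) :
    Set (Matrix (Idx d) (Idx d) ℂ) :=
  {X | (Xᴴ = -X ∧ X * proj d ψ = proj d ψ * X) ∧ ActsOn d S X}

attribute [local instance] LieRing.ofAssociativeRing in
/-- The unitary generation property: the real Lie algebra generated by the
neighborhood stabilizer algebras is the full stabilizer algebra `u_ψ`. -/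
noncomputable def UnitaryGenProp (d : Fin N → ℕ) {K : ℕ} (𝒩 : Fin K → Finset (Fin N))
    (ψ : Idx d → ℂ) : Prop :=
  ((LieSubalgebra.lieSpan ℝ (Matrix (Idx d) (Idx d) ℂ)
      (⋃ k, nstabSet d (𝒩 k) ψ)) : Set (Matrix (Idx d) (Idx d) ℂ)) = stabSet d ψ

/-- The unitary stabilizer group `U_ψ` (as a set of matrices). -/
noncomputable def uStab (d : Fin N → ℕ) (ψ : Idx d → ℂ) : Set (Matrix (Idx d) (Idx d) ℂ) :=
  {U | U ∈ Matrix.unitaryGroup (Idx d) ℂ ∧ U * proj d ψ * Uᴴ = proj d ψ}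

/-- The neighborhood unitary stabilizer group `U_{𝒩ₖ,ψ}` (as a set of matrices). -/
noncomputable def uNStab (d : Fin N → ℕ) (S : Finset (Fin N)) (ψ : Idx d → ℂ) :
    Set (Matrix (Idx d) (Idx d) ℂ) :=
  {U | (U ∈ Matrix.unitaryGroup (Idx d) ℂ ∧ U * proj d ψ * Uᴴ = proj d ψ) ∧ ActsOn d S U}

/-- `x log x` with the convention `0 log 0 = 0`. -/
noncomputable def entAux (x : ℝ) : ℝ := if x = 0 then 0 else x * Real.log x

open Classical in
/-- Von Neumann entropy of a (Hermitian) matrix. -/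
noncomputable def vnEntropy {n : Type*} [Fintype n] [DecidableEq n]
    (σ : Matrix n n ℂ) : ℝ :=
  if h : σ.IsHermitian then -∑ i, entAux (h.eigenvalues i) else 0



section GraphStates

variable {N : ℕ} (dq : ℕ)

/-- The edge-wise entangling unitary `U_G = ∏_{{i,j}∈E} C^H_{ij}` (a diagonal matrix). -/
noncomputable def graphUnitary (G : SimpleGraph (Fin N)) [DecidableRel G.Adj]
    (H : Matrix (Fin dq) (Fin dq) ℂ) :
    Matrix (Fin N → Fin dq) (Fin N → Fin dq) ℂ :=
  Matrix.diagonal fun a =>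
    ∏ p ∈ Finset.univ.filter (fun p : Fin N × Fin N => p.1 < p.2 ∧ G.Adj p.1 p.2),
      H (a p.1) (a p.2)

/-- The local state `|+⟩ = d^{-1/2} H e₀`. -/
noncomputable def plusVec (hd : 0 < dq) (H : Matrix (Fin dq) (Fin dq) ℂ) : Fin dq → ℂ :=
  fun x => H x ⟨0, hd⟩ / (Real.sqrt dq : ℂ)

/-- The graph state `|G⟩ = U_G |+⟩^{⊗N}`. -/
noncomputable def graphState (G : SimpleGraph (Fin N)) [DecidableRel G.Adj]
    (hd : 0 < dq) (H : Matrix (Fin dq) (Fin dq) ℂ) : (Fin N → Fin dq) → ℂ :=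
  (graphUnitary dq G H).mulVec fun a => ∏ i, plusVec dq hd H (a i)

open Classical in
/-- Kraus operators `(|+⟩⟨x|)ᵢ ⊗ I` of the map tracing out site `i` and re-preparing it
in `|+⟩`. -/
noncomputable def repKraus (hd : 0 < dq) (H : Matrix (Fin dq) (Fin dq) ℂ) (i : Fin N)
    (x : Fin dq) : Matrix (Fin N → Fin dq) (Fin N → Fin dq) ℂ :=
  fun a b => if (∀ l, l ≠ i → a l = b l) ∧ b i = x then plusVec dq hd H (a i) else 0

/-- Conjugation superoperator `ρ ↦ A ρ Aᴴ`. -/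
noncomputable def conjMap {ι : Type*} [Fintype ι] [DecidableEq ι] (A : Matrix ι ι ℂ) :
    Matrix ι ι ℂ →ₗ[ℂ] Matrix ι ι ℂ :=
  LinearMap.mulLeft ℂ A ∘ₗ LinearMap.mulRight ℂ Aᴴ

/-- The stabilizing neighborhood map `Eᵢ = 𝒰_G ∘ ((|+⟩⟨+| Tr)ᵢ ⊗ Id) ∘ 𝒰_G⁻¹`. -/
noncomputable def graphMap (G : SimpleGraph (Fin N)) [DecidableRel G.Adj]
    (hd : 0 < dq) (H : Matrix (Fin dq) (Fin dq) ℂ) (i : Fin N) :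
    Sop (fun _ : Fin N => dq) :=
  conjMap (graphUnitary dq G H) ∘ₗ
    (∑ x : Fin dq, LinearMap.mulLeft ℂ (repKraus dq hd H i x) ∘ₗ
      LinearMap.mulRight ℂ (repKraus dq hd H i x)ᴴ) ∘ₗ
    conjMap (graphUnitary dq G H)ᴴ

/-- The neighborhood of a vertex: the vertex together with its graph neighbors. -/
def graphNbhd (G : SimpleGraph (Fin N)) [DecidableRel G.Adj] (i : Fin N) :
    Finset (Fin N) :=
  insert i (G.neighborFinset i)

/-!
`Eᵢ` is the channel `Fᵢ = (|+⟩⟨+| Tr)ᵢ ⊗ Id` conjugated by the unitary `U_G`, and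
`|G⟩ = U_G |+⟩^{⊗N}`, so it suffices to study the `Fᵢ`. Since they replace distinct sites,
applying all of them in any order to `ρ` gives `Tr ρ · |+⟩⟨+|^{⊗N}`; in particular
`|+⟩⟨+|^{⊗N}` lies in the range of the idempotent `Fᵢ`, so `Fᵢ` fixes it.
Locality: in `U_G K U_Gᴴ`, for a Kraus operator `K` of `Fᵢ`, the phase of every edge not touching
`i` cancels against its conjugate because `|H_{jk}| = 1`, which leaves an operator on `{i} ∪ ∂i`.
-/

section ProductState

open Finset Matrix

variable {ι α : Type*} [Fintype ι] (φ : α → ℂ)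

def productVec (a : ι → α) : ℂ := ∏ j, φ (a j)

lemma star_productVec_dotProduct [DecidableEq ι] [Fintype α] (hφ : star φ ⬝ᵥ φ = 1) :
    star (productVec (ι := ι) φ) ⬝ᵥ productVec φ = 1 := by
  simp only [dotProduct, productVec, Pi.star_apply, star_prod, ← prod_mul_distrib]
  rw [← Fintype.prod_sum (ι := ι) fun _ y => star (φ y) * φ y]
  exact prod_eq_one fun _ _ => hφ

end ProductState

lemma mul_star_self_of_norm_eq_one {z : ℂ} (hz : ‖z‖ = 1) : z * star z = 1 := by
  rw [Complex.star_def, Complex.mul_conj', hz]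
  norm_num

section Conjugation

open Matrix

variable {ι : Type*} [Fintype ι] [DecidableEq ι]

lemma conjMap_apply (A ρ : Matrix ι ι ℂ) : conjMap A ρ = A * ρ * Aᴴ := by
  simp [conjMap, Matrix.mul_assoc]

lemma conjMap_comp (A B : Matrix ι ι ℂ) : conjMap A ∘ₗ conjMap B = conjMap (A * B) := by
  ext1 ρ
  simp only [LinearMap.comp_apply, conjMap_apply, conjTranspose_mul, Matrix.mul_assoc]

lemma conjMap_one : conjMap (1 : Matrix ι ι ℂ) = LinearMap.id := by
  ext1 ρ
  simp [conjMap_apply]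

lemma conjMap_comp_conjMap_conjTranspose {U : Matrix ι ι ℂ} (hU : U ∈ unitaryGroup ι ℂ) :
    conjMap U ∘ₗ conjMap Uᴴ = LinearMap.id := by
  rw [conjMap_comp, ← star_eq_conjTranspose, mem_unitaryGroup_iff.1 hU, conjMap_one]

lemma conjMap_conjTranspose_comp_conjMap {U : Matrix ι ι ℂ} (hU : U ∈ unitaryGroup ι ℂ) :
    conjMap Uᴴ ∘ₗ conjMap U = LinearMap.id := by
  rw [conjMap_comp, ← star_eq_conjTranspose, mem_unitaryGroup_iff'.1 hU, conjMap_one]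

lemma trace_conjMap_conjTranspose {U : Matrix ι ι ℂ} (hU : U ∈ unitaryGroup ι ℂ)
    (ρ : Matrix ι ι ℂ) : (conjMap Uᴴ ρ).trace = ρ.trace := by
  rw [conjMap_apply, conjTranspose_conjTranspose, trace_mul_cycle, ← star_eq_conjTranspose,
    mem_unitaryGroup_iff.1 hU, one_mul]

lemma sum_conjTranspose_mul_self_unitary_conj {κ : Type*} [Fintype κ] {U : Matrix ι ι ℂ}
    (hU : U ∈ unitaryGroup ι ℂ) {K : κ → Matrix ι ι ℂ} (hK : ∑ x, (K x)ᴴ * K x = 1) :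
    ∑ x, (U * K x * Uᴴ)ᴴ * (U * K x * Uᴴ) = 1 := by
  have hUU : Uᴴ * U = 1 := by rw [← star_eq_conjTranspose, ← mem_unitaryGroup_iff']; exact hU
  have hconj : ∀ x, (U * K x * Uᴴ)ᴴ * (U * K x * Uᴴ) = U * ((K x)ᴴ * K x) * Uᴴ := fun x => by
    simp only [conjTranspose_mul, conjTranspose_conjTranspose, Matrix.mul_assoc]
    rw [← Matrix.mul_assoc Uᴴ U, hUU, Matrix.one_mul]
  rw [Finset.sum_congr rfl fun x _ => hconj x, ← Finset.sum_mul, ← Finset.mul_sum, hK,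
    Matrix.mul_one, ← star_eq_conjTranspose, ← mem_unitaryGroup_iff]
  exact hU

end Conjugation

lemma seqComp_conj {V : Type*} [AddCommMonoid V] [Module ℂ V] {A B : V →ₗ[ℂ] V}
    (hAB : A ∘ₗ B = LinearMap.id) (hBA : B ∘ₗ A = LinearMap.id) :
    ∀ {T : ℕ} (E : Fin T → V →ₗ[ℂ] V),
      seqComp (fun t => A ∘ₗ E t ∘ₗ B) = A ∘ₗ seqComp E ∘ₗ B
  | 0, _ => by simp [seqComp, hAB]
  | T + 1, E => by
    simp only [seqComp, seqComp_conj hAB hBA fun t => E t.castSucc, LinearMap.comp_assoc]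
    rw [← LinearMap.comp_assoc _ A B, hBA, LinearMap.id_comp]

lemma proj_mulVec {d : Fin N → ℕ} (M : Matrix (Idx d) (Idx d) ℂ) (ψ : Idx d → ℂ) :
    proj d (M *ᵥ ψ) = conjMap M (proj d ψ) := by
  change Matrix.vecMulVec _ (star _) = conjMap M (Matrix.vecMulVec ψ (star ψ))
  rw [conjMap_apply, Matrix.mul_vecMulVec, Matrix.vecMulVec_mul, Matrix.star_mulVec]

lemma isNeighborhoodMap_sum_conjMap {d : Fin N → ℕ} {S : Finset (Fin N)} {m : ℕ}
    (K : Fin m → Matrix (Idx d) (Idx d) ℂ) (hK : ∀ x, ActsOn d S (K x))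
    (hsum : ∑ x, (K x)ᴴ * K x = 1) : IsNeighborhoodMap d S (∑ x, conjMap (K x)) :=
  ⟨m, K, hK, fun ρ => by simp [LinearMap.sum_apply, conjMap_apply], hsum⟩

lemma actsOn_of_apply_eq {d : Fin N → ℕ} {S : Finset (Fin N)} {X : Matrix (Idx d) (Idx d) ℂ}
    (hoff : ∀ a b, (∃ l ∉ S, a l ≠ b l) → X a b = 0)
    (hloc : ∀ a b a' b', (∀ l ∈ S, a l = a' l ∧ b l = b' l) →
      (∀ l ∉ S, a l = b l ∧ a' l = b' l) → X a b = X a' b') :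
    ActsOn d S X := by
  rcases isEmpty_or_nonempty (SIdx d Sᶜ) with hempty | ⟨⟨w₀⟩⟩
  · exact ⟨0, fun _ _ w => isEmptyElim w⟩
  refine ⟨fun u u' => X (merge d S u w₀) (merge d S u' w₀), fun u u' w w' => ?_⟩
  split_ifs with hw
  · subst hw
    refine hloc _ _ _ _ (fun l hl => ?_) fun l hl => ?_ <;> simp [merge, hl]
  · obtain ⟨⟨l, hl⟩, hne⟩ := Function.ne_iff.1 hw
    exact hoff _ _ ⟨l, Finset.mem_compl.1 hl, by simpa [merge, Finset.mem_compl.1 hl] using hne⟩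

section Replacement

open Finset Function Matrix

variable {ι α : Type*} [Fintype ι] [DecidableEq ι] [Fintype α] [DecidableEq α]

def agreeOff (S : Finset ι) (a : ι → α) : Finset (ι → α) :=
  univ.filter fun x => ∀ j ∉ S, x j = a j

lemma agreeOff_empty (a : ι → α) : agreeOff ∅ a = {a} := by
  ext x
  simp [agreeOff, funext_iff]

lemma agreeOff_univ (a : ι → α) : agreeOff univ a = univ := by
  simp [agreeOff]

lemma sum_agreeOff_insert {M : Type*} [AddCommMonoid M] {S : Finset ι} {i : ι} (hi : i ∉ S)
    (a : ι → α) (f : (ι → α) → M) :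
    ∑ x ∈ agreeOff (insert i S) a, f x = ∑ y, ∑ x ∈ agreeOff S (update a i y), f x := by
  rw [← sum_fiberwise (agreeOff (insert i S) a) (fun x => x i)]
  refine sum_congr rfl fun y _ => sum_congr ?_ fun _ _ => rfl
  ext x
  simp only [agreeOff, mem_filter, mem_univ, true_and, mem_insert, not_or]
  constructor
  · rintro ⟨hx, rfl⟩ j hj
    by_cases hji : j = i
    · subst hji; simp
    · rw [update_of_ne hji]; exact hx j ⟨hji, hj⟩
  · intro hx
    refine ⟨fun j hj => ?_, by simpa using hx i hi⟩
    simpa [update_of_ne hj.1] using hx j hj.2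

lemma sum_ite_eq_update {M : Type*} [AddCommMonoid M] (a : ι → α) (i : ι) (x : α)
    (g : (ι → α) → M) :
    ∑ c, (if a = update c i x then g c else 0) = if a i = x then ∑ y, g (update a i y) else 0 := by
  rw [← sum_filter]
  split_ifs with hx
  · have hfilter : univ.filter (fun c => a = update c i x) = agreeOff (insert i ∅) a := by
      ext c
      simp [agreeOff, eq_update_iff, hx, eq_comm]
    rw [hfilter, sum_agreeOff_insert (notMem_empty i)]
    simp [agreeOff_empty]
  · refine sum_eq_zero fun c hc => absurd ?_ hx
    rw [(mem_filter.1 hc).2, update_self]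

variable (φ : α → ℂ)

-- `(|φ⟩⟨x|)ᵢ ⊗ I`
def replaceKraus (i : ι) (x : α) : Matrix (ι → α) (ι → α) ℂ :=
  of fun a b => if b = update a i x then φ (a i) else 0

noncomputable def replaceMap (i : ι) : Module.End ℂ (Matrix (ι → α) (ι → α) ℂ) :=
  ∑ x, conjMap (replaceKraus φ i x)

lemma replaceKraus_mul_apply (i : ι) (x : α) (M : Matrix (ι → α) (ι → α) ℂ) (a b : ι → α) :
    (replaceKraus φ i x * M) a b = φ (a i) * M (update a i x) b := by
  simp [replaceKraus, Matrix.mul_apply]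

lemma mul_conjTranspose_replaceKraus_apply (i : ι) (x : α) (M : Matrix (ι → α) (ι → α) ℂ)
    (a b : ι → α) : (M * (replaceKraus φ i x)ᴴ) a b = M a (update b i x) * star (φ (b i)) := by
  simp [replaceKraus, Matrix.mul_apply, apply_ite]

lemma replaceMap_apply (i : ι) (ρ : Matrix (ι → α) (ι → α) ℂ) (a b : ι → α) :
    replaceMap φ i ρ a b = φ (a i) * star (φ (b i)) * ∑ x, ρ (update a i x) (update b i x) := by
  simp only [replaceMap, LinearMap.sum_apply, conjMap_apply, Matrix.sum_apply,
    Matrix.mul_assoc, replaceKraus_mul_apply, mul_conjTranspose_replaceKraus_apply, mul_sum]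
  exact sum_congr rfl fun x _ => by ring

lemma sum_conjTranspose_mul_replaceKraus (hφ : star φ ⬝ᵥ φ = 1) (i : ι) :
    ∑ x, (replaceKraus φ i x)ᴴ * replaceKraus φ i x = 1 := by
  ext a b
  simp only [Matrix.sum_apply, Matrix.mul_apply, conjTranspose_apply, replaceKraus, of_apply,
    apply_ite star, star_zero, ite_mul, zero_mul, sum_ite_eq_update, update_self, update_idem]
  simp_all [update_eq_self, Matrix.one_apply, eq_comm, dotProduct]

lemma replaceMap_idem (hφ : star φ ⬝ᵥ φ = 1) (i : ι) (ρ : Matrix (ι → α) (ι → α) ℂ) :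
    replaceMap φ i (replaceMap φ i ρ) = replaceMap φ i ρ := by
  ext a b
  have hφ' : ∑ x, φ x * star (φ x) = 1 := by simpa [dotProduct, mul_comm] using hφ
  simp only [replaceMap_apply, update_self, update_idem]
  rw [← sum_mul, hφ', one_mul]

-- `(|φ⟩⟨φ| Tr)_S ⊗ Id_{Sᶜ}` entrywise: `x` runs over the indices that agree with `a` off `S`.
noncomputable def replaceOn (S : Finset ι) (ρ : Matrix (ι → α) (ι → α) ℂ) :
    Matrix (ι → α) (ι → α) ℂ :=
  of fun a b => (∏ j ∈ S, φ (a j) * star (φ (b j))) * ∑ x ∈ agreeOff S a, ρ x (S.piecewise x b)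

lemma replaceOn_empty (ρ : Matrix (ι → α) (ι → α) ℂ) : replaceOn φ ∅ ρ = ρ := by
  ext a b
  simp [replaceOn, agreeOff_empty]

lemma replaceOn_univ (ρ : Matrix (ι → α) (ι → α) ℂ) :
    replaceOn φ univ ρ = ρ.trace • vecMulVec (productVec φ) (star (productVec φ)) := by
  ext a b
  simp [replaceOn, agreeOff_univ, productVec, vecMulVec_apply, prod_mul_distrib, Matrix.trace]
  ring

lemma replaceMap_replaceOn {S : Finset ι} {i : ι} (hi : i ∉ S) (ρ : Matrix (ι → α) (ι → α) ℂ) :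
    replaceMap φ i (replaceOn φ S ρ) = replaceOn φ (insert i S) ρ := by
  ext a b
  have hne : ∀ j ∈ S, j ≠ i := fun j hj h => hi (h ▸ hj)
  have hpiece : ∀ y, ∀ x ∈ agreeOff S (update a i y),
      S.piecewise x (update b i y) = (insert i S).piecewise x b := by
    intro y x hx
    have hxi : x i = y := by simpa using (mem_filter.1 hx).2 i hi
    rw [piecewise_insert, hxi, update_piecewise_of_notMem _ _ _ hi]
  have hprod : ∀ y, ∏ j ∈ S, φ (update a i y j) * star (φ (update b i y j)) =
      ∏ j ∈ S, φ (a j) * star (φ (b j)) := fun y =>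
    prod_congr rfl fun j hj => by rw [update_of_ne (hne j hj), update_of_ne (hne j hj)]
  simp only [replaceMap_apply, replaceOn, of_apply, prod_insert hi, sum_agreeOff_insert hi, hprod,
    ← mul_sum, mul_assoc]
  congr 3
  exact sum_congr rfl fun y _ => sum_congr rfl fun x hx => by rw [hpiece y x hx]

lemma seqComp_replaceMap (ρ : Matrix (ι → α) (ι → α) ℂ) :
    ∀ {k : ℕ} (f : Fin k ↪ ι),
      seqComp (fun t => replaceMap φ (f t)) ρ = replaceOn φ (univ.map f) ρ
  | 0, f => by simp [seqComp, replaceOn_empty]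
  | k + 1, f => by
    have hlast : f (Fin.last k) ∉ univ.map (Fin.castSuccEmb.trans f) := by
      simp [Fin.castSucc_ne_last]
    rw [Fin.univ_castSuccEmb, map_cons, cons_eq_insert, Finset.map_map,
      ← replaceMap_replaceOn φ hlast, ← seqComp_replaceMap ρ (Fin.castSuccEmb.trans f)]
    rfl

lemma replaceMap_productState (hφ : star φ ⬝ᵥ φ = 1) (i : ι) :
    replaceMap φ i (vecMulVec (productVec φ) (star (productVec φ))) =
      vecMulVec (productVec φ) (star (productVec φ)) := by
  set P : Matrix (ι → α) (ι → α) ℂ := vecMulVec (productVec φ) (star (productVec φ))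
  have hP : replaceOn φ univ P = P := by
    rw [replaceOn_univ, trace_vecMulVec, dotProduct_comm, star_productVec_dotProduct φ hφ,
      one_smul]
  have hsplit : replaceOn φ univ P = replaceMap φ i (replaceOn φ (univ.erase i) P) := by
    rw [replaceMap_replaceOn φ (notMem_erase i univ), insert_erase (mem_univ i)]
  rw [← hP, hsplit, replaceMap_idem φ hφ]

end Replacement

section GraphState

open Finset Function Matrix

variable {dq}

def graphPhase (G : SimpleGraph (Fin N)) [DecidableRel G.Adj] (H : Matrix (Fin dq) (Fin dq) ℂ)
    (a : Fin N → Fin dq) : ℂ :=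
  ∏ p ∈ univ.filter (fun p : Fin N × Fin N => p.1 < p.2 ∧ G.Adj p.1 p.2), H (a p.1) (a p.2)

lemma graphUnitary_eq_diagonal (G : SimpleGraph (Fin N)) [DecidableRel G.Adj]
    (H : Matrix (Fin dq) (Fin dq) ℂ) : graphUnitary dq G H = diagonal (graphPhase G H) := rfl

lemma graphUnitary_mem_unitaryGroup (G : SimpleGraph (Fin N)) [DecidableRel G.Adj]
    {H : Matrix (Fin dq) (Fin dq) ℂ} (hH : ∀ y z, ‖H y z‖ = 1) :
    graphUnitary dq G H ∈ unitaryGroup (Fin N → Fin dq) ℂ := by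
  rw [mem_unitaryGroup_iff, graphUnitary_eq_diagonal, star_eq_conjTranspose,
    diagonal_conjTranspose, diagonal_mul_diagonal, ← diagonal_one]
  congr 1
  funext a
  simp only [graphPhase, Pi.star_apply, star_prod, ← prod_mul_distrib]
  exact prod_eq_one fun p _ => mul_star_self_of_norm_eq_one (hH _ _)

lemma graphPhase_mul_star_eq (G : SimpleGraph (Fin N)) [DecidableRel G.Adj]
    {H : Matrix (Fin dq) (Fin dq) ℂ} (hH : ∀ y z, ‖H y z‖ = 1) {i : Fin N}
    {a b a' b' : Fin N → Fin dq} (hab : ∀ l ≠ i, b l = a l) (hab' : ∀ l ≠ i, b' l = a' l)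
    (ha : ∀ l ∈ graphNbhd G i, a l = a' l) (hb : ∀ l ∈ graphNbhd G i, b l = b' l) :
    graphPhase G H a * star (graphPhase G H b) = graphPhase G H a' * star (graphPhase G H b') := by
  simp only [graphPhase, star_prod, ← prod_mul_distrib]
  refine prod_congr rfl fun p hp => ?_
  have hadj := (mem_filter.1 hp).2.2
  by_cases hpi : p.1 = i ∨ p.2 = i
  · have hmem : p.1 ∈ graphNbhd G i ∧ p.2 ∈ graphNbhd G i := by
      rcases hpi with h | h <;> subst h <;> simp [graphNbhd, hadj, hadj.symm]
    rw [ha _ hmem.1, ha _ hmem.2, hb _ hmem.1, hb _ hmem.2]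
  · obtain ⟨h1, h2⟩ := not_or.1 hpi
    rw [hab _ h1, hab _ h2, hab' _ h1, hab' _ h2,
      mul_star_self_of_norm_eq_one (hH _ _), mul_star_self_of_norm_eq_one (hH _ _)]

lemma actsOn_graphUnitary_conj_replaceKraus (G : SimpleGraph (Fin N)) [DecidableRel G.Adj]
    {H : Matrix (Fin dq) (Fin dq) ℂ} (hH : ∀ y z, ‖H y z‖ = 1) (φ : Fin dq → ℂ) (i : Fin N)
    (x : Fin dq) :
    ActsOn (fun _ => dq) (graphNbhd G i)
      (graphUnitary dq G H * replaceKraus φ i x * (graphUnitary dq G H)ᴴ) := by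
  have hi : i ∈ graphNbhd G i := mem_insert_self _ _
  have hentry : ∀ a b, (graphUnitary dq G H * replaceKraus φ i x * (graphUnitary dq G H)ᴴ) a b =
      if b = update a i x then graphPhase G H a * φ (a i) * star (graphPhase G H b) else 0 := by
    intro a b
    rw [graphUnitary_eq_diagonal, diagonal_conjTranspose, mul_diagonal, diagonal_mul]
    simp only [replaceKraus, of_apply, Pi.star_apply]
    split_ifs <;> ring
  refine actsOn_of_apply_eq (fun a b ⟨l, hl, hne⟩ => ?_) fun a b a' b' hS hSc => ?_
  · rw [hentry, if_neg]
    rintro rfl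
    exact hne (update_of_ne (fun (h : l = i) => hl (h ▸ hi)) _ _).symm
  · have hoff : ∀ l ≠ i, b l = a l ↔ b' l = a' l := fun l _ => by
      by_cases hl : l ∈ graphNbhd G i
      · rw [(hS l hl).1, (hS l hl).2]
      · simp [(hSc l hl).1, (hSc l hl).2]
    have hiff : b = update a i x ↔ b' = update a' i x := by
      simp only [eq_update_iff, (hS i hi).2]
      exact and_congr_right' (forall₂_congr hoff)
    rw [hentry, hentry, if_congr hiff rfl rfl]
    split_ifs with hb'
    · have hab' : ∀ l ≠ i, b' l = a' l := fun l hl => by rw [hb', update_of_ne hl]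
      have hab : ∀ l ≠ i, b l = a l := fun l hl => (hoff l hl).2 (hab' l hl)
      rw [mul_right_comm, graphPhase_mul_star_eq G hH hab hab' (fun l hl => (hS l hl).1)
        (fun l hl => (hS l hl).2), (hS i hi).1, mul_right_comm]
    · rfl

lemma star_plusVec_dotProduct (hd : 0 < dq) {H : Matrix (Fin dq) (Fin dq) ℂ}
    (hH : ∀ y z, ‖H y z‖ = 1) : star (plusVec dq hd H) ⬝ᵥ plusVec dq hd H = 1 := by
  have hsqrt : ((Real.sqrt dq : ℂ)) * (Real.sqrt dq : ℂ) = dq := by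
    rw [← Complex.ofReal_mul, Real.mul_self_sqrt (Nat.cast_nonneg dq), Complex.ofReal_natCast]
  have hterm : ∀ y, star (plusVec dq hd H y) * plusVec dq hd H y = (dq : ℂ)⁻¹ := fun y => by
    rw [mul_comm, plusVec, star_div₀, div_mul_div_comm, mul_star_self_of_norm_eq_one (hH _ _),
      Complex.star_def, Complex.conj_ofReal, hsqrt, one_div]
  have hdq : (dq : ℂ) ≠ 0 := by exact_mod_cast hd.ne'
  simp only [dotProduct, Pi.star_apply, hterm, sum_const, card_univ, Fintype.card_fin,
    nsmul_eq_mul]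
  exact mul_inv_cancel₀ hdq

lemma repKraus_eq_replaceKraus (hd : 0 < dq) (H : Matrix (Fin dq) (Fin dq) ℂ) (i : Fin N)
    (x : Fin dq) : repKraus dq hd H i x = replaceKraus (plusVec dq hd H) i x := by
  ext a b
  simp only [repKraus, replaceKraus, of_apply, eq_update_iff]
  exact if_congr ⟨fun ⟨h₁, h₂⟩ => ⟨h₂, fun l hl => (h₁ l hl).symm⟩,
    fun ⟨h₂, h₁⟩ => ⟨fun l hl => (h₁ l hl).symm, h₂⟩⟩ rfl rfl

lemma graphMap_eq (G : SimpleGraph (Fin N)) [DecidableRel G.Adj] (hd : 0 < dq)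
    (H : Matrix (Fin dq) (Fin dq) ℂ) (i : Fin N) :
    graphMap dq G hd H i = conjMap (graphUnitary dq G H) ∘ₗ replaceMap (plusVec dq hd H) i ∘ₗ
      conjMap (graphUnitary dq G H)ᴴ := by
  simp only [graphMap, repKraus_eq_replaceKraus]
  rfl

lemma proj_graphState (G : SimpleGraph (Fin N)) [DecidableRel G.Adj] (hd : 0 < dq)
    (H : Matrix (Fin dq) (Fin dq) ℂ) :
    proj (fun _ => dq) (graphState dq G hd H) = conjMap (graphUnitary dq G H)
      (vecMulVec (productVec (plusVec dq hd H)) (star (productVec (plusVec dq hd H)))) :=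
  proj_mulVec _ _

lemma isNeighborhoodMap_graphMap (G : SimpleGraph (Fin N)) [DecidableRel G.Adj] (hd : 0 < dq)
    {H : Matrix (Fin dq) (Fin dq) ℂ} (hH : ∀ y z, ‖H y z‖ = 1) (i : Fin N) :
    IsNeighborhoodMap (fun _ => dq) (graphNbhd G i) (graphMap dq G hd H i) := by
  have hsum : graphMap dq G hd H i = ∑ x, conjMap
      (graphUnitary dq G H * replaceKraus (plusVec dq hd H) i x * (graphUnitary dq G H)ᴴ) := by
    ext1 ρ
    simp [graphMap_eq, replaceMap, LinearMap.sum_apply, conjMap_apply, Matrix.mul_assoc]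
  rw [hsum]
  exact isNeighborhoodMap_sum_conjMap _ (actsOn_graphUnitary_conj_replaceKraus G hH _ i)
    (sum_conjTranspose_mul_self_unitary_conj (graphUnitary_mem_unitaryGroup G hH)
      (sum_conjTranspose_mul_replaceKraus _ (star_plusVec_dotProduct hd hH) i))

lemma graphMap_proj_graphState (G : SimpleGraph (Fin N)) [DecidableRel G.Adj] (hd : 0 < dq)
    {H : Matrix (Fin dq) (Fin dq) ℂ} (hH : ∀ y z, ‖H y z‖ = 1) (i : Fin N) :
    graphMap dq G hd H i (proj (fun _ => dq) (graphState dq G hd H)) =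
      proj (fun _ => dq) (graphState dq G hd H) := by
  have hUU := conjMap_conjTranspose_comp_conjMap (graphUnitary_mem_unitaryGroup G hH)
  rw [proj_graphState, graphMap_eq]
  simp only [LinearMap.comp_apply]
  rw [← LinearMap.comp_apply (conjMap (graphUnitary dq G H)ᴴ), hUU, LinearMap.id_apply,
    replaceMap_productState _ (star_plusVec_dotProduct hd hH)]

lemma seqComp_graphMap_perm (G : SimpleGraph (Fin N)) [DecidableRel G.Adj] (hd : 0 < dq)
    {H : Matrix (Fin dq) (Fin dq) ℂ} (hH : ∀ y z, ‖H y z‖ = 1) (π : Equiv.Perm (Fin N))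
    {σ : Matrix (Fin N → Fin dq) (Fin N → Fin dq) ℂ} (hσ : σ.trace = 1) :
    seqComp (fun t => graphMap dq G hd H (π t)) σ = proj (fun _ => dq) (graphState dq G hd H) := by
  have hU := graphUnitary_mem_unitaryGroup G hH
  have hprep := seqComp_replaceMap (plusVec dq hd H) ((conjMap (graphUnitary dq G H)ᴴ) σ)
    π.toEmbedding
  simp only [Equiv.coe_toEmbedding, map_univ_equiv, replaceOn_univ,
    trace_conjMap_conjTranspose hU, hσ, one_smul] at hprep
  simp only [graphMap_eq]
  rw [seqComp_conj (conjMap_comp_conjMap_conjTranspose hU) (conjMap_conjTranspose_comp_conjMap hU),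
    LinearMap.comp_apply, LinearMap.comp_apply, hprep, proj_graphState]

end GraphState

theorem graph_state_rfts_general {N dq : ℕ} (hd : 0 < dq)
    (G : SimpleGraph (Fin N)) [DecidableRel G.Adj]
    (H : Matrix (Fin dq) (Fin dq) ℂ)
    (hH3 : ∀ i j, ‖H i j‖ = 1) :
    (∀ i, IsNeighborhoodMap (fun _ : Fin N => dq) (graphNbhd G i)
        (graphMap dq G hd H i)) ∧
    (∀ i, graphMap dq G hd H i (proj (fun _ : Fin N => dq) (graphState dq G hd H)) =
        proj (fun _ : Fin N => dq) (graphState dq G hd H)) ∧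
    (∀ π : Equiv.Perm (Fin N), ∀ σ, IsDensity (fun _ : Fin N => dq) σ →
        seqComp (fun t => graphMap dq G hd H (π t)) σ =
          proj (fun _ : Fin N => dq) (graphState dq G hd H)) ∧
    RFTS (fun _ : Fin N => dq) (graphNbhd G) (graphState dq G hd H) := by
  have hnbhd := isNeighborhoodMap_graphMap G hd hH3
  have hfix := graphMap_proj_graphState G hd hH3
  have hprep : ∀ π σ, IsDensity (fun _ : Fin N => dq) σ → _ := fun π σ hσ =>
    seqComp_graphMap_perm G hd hH3 π hσ.2
  exact ⟨hnbhd, hfix, hprep, N, graphMap dq G hd H, fun t => ⟨t, hnbhd t⟩, hfix, hprep⟩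

/-- graph states are RFTS: for a Hadamard matrix `H` and graph `G`,
the graph state `|G⟩` is robustly finite-time stabilized by the maps
`Eᵢ = 𝒰_G ∘ ((|+⟩⟨+|Tr)ᵢ ⊗ Id) ∘ 𝒰_G⁻¹`: each `Eᵢ` is a neighborhood map on
`𝒩ᵢ = {i} ∪ ∂i`, each leaves `|G⟩⟨G|` invariant, and any ordering of `E_1, …, E_N`
maps every density matrix to `|G⟩⟨G|`; in particular `|G⟩` is RFTS w.r.t. `𝒩`. -/
theorem graph_state_rfts {N dq : ℕ} (hd : 0 < dq)
    (G : SimpleGraph (Fin N)) [DecidableRel G.Adj]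
    (H : Matrix (Fin dq) (Fin dq) ℂ)
    (hH1 : Hᴴ * H = (dq : ℂ) • 1) (hH2 : Hᵀ = H)
    (hH3 : ∀ i j, ‖H i j‖ = 1) :
    (∀ i, IsNeighborhoodMap (fun _ : Fin N => dq) (graphNbhd G i)
        (graphMap dq G hd H i)) ∧
    (∀ i, graphMap dq G hd H i (proj (fun _ : Fin N => dq) (graphState dq G hd H)) =
        proj (fun _ : Fin N => dq) (graphState dq G hd H)) ∧
    (∀ π : Equiv.Perm (Fin N), ∀ σ, IsDensity (fun _ : Fin N => dq) σ →
        seqComp (fun t => graphMap dq G hd H (π t)) σ =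
          proj (fun _ : Fin N => dq) (graphState dq G hd H)) ∧
    RFTS (fun _ : Fin N => dq) (graphNbhd G) (graphState dq G hd H) :=
  graph_state_rfts_general hd G H hH3

end GraphStates

end QLS
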